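/- Bursting (negative-binomial-type) limit of the binary model: fix reals a > 0, δ > 0 and θ with 0 < θ ≤ 1 satisfying δ(1−θ) < 1, and fix n ∈ ℕ. For ν > aδ set b = ν/δ and let P_n(ν) = P_{0,n} + P_{1,n} be the binary-model steady-state protein probability with parameters (a, b, θ, ν). Then P_n(ν) → ((a)_n/n!)·(δ/(1+δθ))^n·((1+δ(θ−1))/(1+δθ))^a as ν → +∞. -/

import Mathlib

open scoped BigOperators
open MeasureTheory Filter Set intervalIntegral

/-- Pochhammer symbol `(a)ₙ = a(a+1)⋯(a+n−1)`, `(a)₀ = 1`. -/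
noncomputable def poch (a : ℝ) (n : ℕ) : ℝ := ∏ k ∈ Finset.range n, (a + k)

/-- Kummer's confluent hypergeometric function `M(a,b,z)`. -/
noncomputable def kummerM (a b z : ℝ) : ℝ :=
  ∑' k : ℕ, poch a k / poch b k * z ^ k / (Nat.factorial k : ℝ)

/-- Steady-state probability `P_{0,n}` of the binary gene model. -/
noncomputable def P0 (a b ν θ : ℝ) (n : ℕ) : ℝ :=
  (b - a) / (kummerM a b (ν * (1 - θ)) * b) * (ν ^ n / (Nat.factorial n : ℝ)) *
    (poch a n / poch (1 + b) n) * kummerM (a + n) (1 + b + n) (-(ν * θ))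

/-- Steady-state probability `P_{1,n}` of the binary gene model. -/
noncomputable def P1 (a b ν θ : ℝ) (n : ℕ) : ℝ :=
  a / (kummerM a b (ν * (1 - θ)) * b) * (ν ^ n / (Nat.factorial n : ℝ)) *
    (poch (1 + a) n / poch (1 + b) n) * kummerM (1 + a + n) (1 + b + n) (-(ν * θ))



lemma poch_succ (a : ℝ) (n : ℕ) : poch a (n+1) = poch a n * (a + n) :=
  Finset.prod_range_succ _ _

lemma poch_pos {a : ℝ} (ha : 0 < a) (n : ℕ) : 0 < poch a n :=
  Finset.prod_pos fun k _ => by positivity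

lemma Gamma_poch {a : ℝ} (ha : 0 < a) (n : ℕ) :
    Real.Gamma (a + n) = Real.Gamma a * poch a n := by
  induction n with
  | zero => simp [poch]
  | succ n ih =>
    have h : a + ((n : ℝ) + 1) = (a + n) + 1 := by ring
    push_cast
    rw [h, Real.Gamma_add_one (by positivity), ih, poch_succ]
    ring

/-- Real Beta integral. -/
noncomputable def rbeta (u v : ℝ) : ℝ := ∫ t in (0:ℝ)..1, t ^ (u-1) * (1-t) ^ (v-1)

lemma complex_integrand_eq {u v : ℝ} (t : ℝ) (ht : t ∈ Set.Icc (0:ℝ) 1) :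
    (t:ℂ) ^ ((u:ℂ)-1) * (1-(t:ℂ)) ^ ((v:ℂ)-1) = ((t ^ (u-1) * (1-t) ^ (v-1) : ℝ) : ℂ) := by
  rw [Complex.ofReal_mul, Complex.ofReal_cpow ht.1, Complex.ofReal_cpow (by linarith [ht.2])]
  push_cast
  ring_nf

lemma rbeta_complex {u v : ℝ} (hu : 0 < u) (hv : 0 < v) :
    Complex.betaIntegral u v = ((rbeta u v : ℝ) : ℂ) := by
  rw [Complex.betaIntegral, rbeta, ← intervalIntegral.integral_ofReal]
  refine intervalIntegral.integral_congr fun t ht => ?_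
  rw [Set.uIcc_of_le (by norm_num : (0:ℝ) ≤ 1)] at ht
  simpa using complex_integrand_eq t ht

lemma rbeta_eq {u v : ℝ} (hu : 0 < u) (hv : 0 < v) :
    rbeta u v = Real.Gamma u * Real.Gamma v / Real.Gamma (u+v) := by
  have h := Complex.Gamma_mul_Gamma_eq_betaIntegral
    (by simpa using hu : 0 < (u:ℂ).re) (by simpa using hv : 0 < (v:ℂ).re)
  rw [rbeta_complex hu hv] at h
  have h2 : ((Real.Gamma u * Real.Gamma v : ℝ) : ℂ)
      = ((Real.Gamma (u+v) * rbeta u v : ℝ) : ℂ) := by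
    push_cast
    rw [← Complex.Gamma_ofReal, ← Complex.Gamma_ofReal, ← Complex.Gamma_ofReal] at *
    push_cast at h ⊢
    rw [h]
  have h3 := Complex.ofReal_inj.mp h2
  have hΓ : Real.Gamma (u+v) ≠ 0 := (Real.Gamma_pos_of_pos (by linarith)).ne'
  field_simp [hΓ]
  rw [h3]; ring

lemma rbeta_pos {u v : ℝ} (hu : 0 < u) (hv : 0 < v) : 0 < rbeta u v := by
  rw [rbeta_eq hu hv]
  have := Real.Gamma_pos_of_pos hu
  have := Real.Gamma_pos_of_pos hv
  have := Real.Gamma_pos_of_pos (show 0 < u + v by linarith)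
  positivity

lemma rbeta_shift {α γ : ℝ} (hα : 0 < α) (hγ : 0 < γ) (k : ℕ) :
    rbeta (α + k) γ = rbeta α γ * (poch α k / poch (α+γ) k) := by
  have h1 : (0:ℝ) < α + k := by positivity
  rw [rbeta_eq h1 hγ, rbeta_eq hα hγ]
  have e : α + k + γ = (α + γ) + k := by ring
  rw [e, Gamma_poch hα, Gamma_poch (by positivity : (0:ℝ) < α + γ)]
  have h2 := (Real.Gamma_pos_of_pos (by positivity : (0:ℝ) < α + γ)).ne'
  have h3 := (poch_pos (by positivity : (0:ℝ) < α + γ) k).ne'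
  have h4 := (Real.Gamma_pos_of_pos hα).ne'
  field_simp

lemma beta_integrableOn {u v : ℝ} (hu : 0 < u) (hv : 0 < v) :
    IntegrableOn (fun t : ℝ => t ^ (u-1) * (1-t) ^ (v-1)) (Ioc 0 1) := by
  have hc := (Complex.betaIntegral_convergent (by simpa using hu : 0 < (u:ℂ).re)
      (by simpa using hv : 0 < (v:ℂ).re)).1
  refine IntegrableOn.congr_fun hc.re (fun t ht => ?_) measurableSet_Ioc
  rw [complex_integrand_eq t ⟨ht.1.le, ht.2⟩]
  simp

lemma rbeta_Ioc {u v : ℝ} :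
    rbeta u v = ∫ t in Ioc (0:ℝ) 1, t ^ (u-1) * (1-t) ^ (v-1) := by
  rw [rbeta, intervalIntegral.integral_of_le (by norm_num : (0:ℝ) ≤ 1)]

lemma rbeta_mono {α γ : ℝ} (hα : 0 < α) (hγ : 0 < γ) (k : ℕ) :
    rbeta (α + k) γ ≤ rbeta α γ := by
  rw [rbeta_Ioc, rbeta_Ioc]
  refine setIntegral_mono_on ((beta_integrableOn (by positivity) hγ))
    (beta_integrableOn hα hγ) measurableSet_Ioc (fun t ht => ?_)
  have h1 : (0:ℝ) < t := ht.1
  have h2 : t ≤ 1 := ht.2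
  have h3 : t ^ (α+(k:ℝ)-1) ≤ t ^ (α-1) :=
    Real.rpow_le_rpow_of_exponent_ge h1 h2 (by nlinarith [Nat.cast_nonneg (α := ℝ) k])
  exact mul_le_mul_of_nonneg_right h3 (Real.rpow_nonneg (by linarith) _)

lemma real_exp_tsum (x : ℝ) : Real.exp x = ∑' k : ℕ, x ^ k / (Nat.factorial k : ℝ) := by
  rw [Real.exp_eq_exp_ℝ, NormedSpace.exp_eq_tsum_div]

lemma euler_rep {α γ : ℝ} (hα : 0 < α) (hγ : 0 < γ) (z : ℝ) :
    rbeta α γ * kummerM α (α+γ) z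
      = ∫ t in Ioc (0:ℝ) 1, Real.exp (z*t) * t ^ (α-1) * (1-t) ^ (γ-1) := by
  set μ := volume.restrict (Ioc (0:ℝ) 1)
  set F : ℕ → ℝ → ℝ := fun k t => z ^ k / (Nat.factorial k : ℝ) * (t ^ (α+(k:ℝ)-1) * (1-t) ^ (γ-1))
    with hF
  have hbi : ∀ k : ℕ, IntegrableOn (fun t : ℝ => t ^ (α+(k:ℝ)-1) * (1-t) ^ (γ-1)) (Ioc 0 1) := by
    intro k
    have := beta_integrableOn (by positivity : (0:ℝ) < α + k) hγ
    simpa using this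
  have hint : ∀ k, Integrable (F k) μ := fun k => ((hbi k).const_mul _)
  have hFval : ∀ k, ∫ t, F k t ∂μ = z ^ k / (Nat.factorial k : ℝ) * rbeta (α+k) γ := by
    intro k
    rw [show (∫ t, F k t ∂μ)
        = ∫ t in Ioc (0:ℝ) 1, z ^ k / (Nat.factorial k : ℝ) * (t ^ (α+(k:ℝ)-1) * (1-t) ^ (γ-1))
        from rfl, MeasureTheory.integral_const_mul, rbeta_Ioc]
  have hnorm : ∀ k, (∫ t, ‖F k t‖ ∂μ) ≤ |z| ^ k / (Nat.factorial k : ℝ) * rbeta α γ := by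
    intro k
    have heq : ∀ t ∈ Ioc (0:ℝ) 1, ‖F k t‖ = |z| ^ k / (Nat.factorial k : ℝ)
        * (t ^ (α+(k:ℝ)-1) * (1-t) ^ (γ-1)) := by
      intro t ht
      have h1 : (0:ℝ) ≤ t := ht.1.le
      have h2 : (0:ℝ) ≤ 1 - t := by linarith [ht.2]
      have hb : (0:ℝ) ≤ t ^ (α+(k:ℝ)-1) * (1-t) ^ (γ-1) :=
        mul_nonneg (Real.rpow_nonneg h1 _) (Real.rpow_nonneg h2 _)
      rw [hF]
      simp only []
      rw [Real.norm_eq_abs, abs_mul, abs_of_nonneg hb, abs_div, abs_pow, Nat.abs_cast]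
    calc (∫ t, ‖F k t‖ ∂μ)
        = ∫ t in Ioc (0:ℝ) 1, |z| ^ k / (Nat.factorial k : ℝ)
            * (t ^ (α+(k:ℝ)-1) * (1-t) ^ (γ-1)) :=
          setIntegral_congr_fun measurableSet_Ioc heq
      _ = |z| ^ k / (Nat.factorial k : ℝ) * rbeta (α+k) γ := by
          rw [MeasureTheory.integral_const_mul, rbeta_Ioc]
      _ ≤ |z| ^ k / (Nat.factorial k : ℝ) * rbeta α γ := by
          have := rbeta_mono hα hγ k
          have h0 : (0:ℝ) ≤ |z| ^ k / (Nat.factorial k : ℝ) := by positivity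
          exact mul_le_mul_of_nonneg_left this h0
  have hsum : Summable fun k => ∫ t, ‖F k t‖ ∂μ := by
    refine Summable.of_nonneg_of_le (fun k => integral_nonneg fun t => norm_nonneg _)
      hnorm ?_
    simpa [div_eq_mul_inv, mul_comm, mul_assoc, mul_left_comm] using
      (Real.summable_pow_div_factorial |z|).mul_right (rbeta α γ)
  have hswap := MeasureTheory.integral_tsum_of_summable_integral_norm hint hsum
  have hpt : ∀ t ∈ Ioc (0:ℝ) 1,
      (∑' k, F k t) = Real.exp (z*t) * t ^ (α-1) * (1-t) ^ (γ-1) := by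
    intro t ht
    have h1 : (0:ℝ) < t := ht.1
    have hterm : ∀ k : ℕ, F k t
        = (t ^ (α-1) * (1-t) ^ (γ-1)) * ((z*t) ^ k / (Nat.factorial k : ℝ)) := by
      intro k
      rw [hF]
      simp only []
      rw [show α+(k:ℝ)-1 = (α-1) + (k:ℝ) by ring, Real.rpow_add h1,
        Real.rpow_natCast, mul_pow]
      ring
    rw [tsum_congr hterm, tsum_mul_left, ← real_exp_tsum]
    ring
  calc rbeta α γ * kummerM α (α+γ) z
      = ∑' k, z ^ k / (Nat.factorial k : ℝ) * rbeta (α+k) γ := by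
        rw [kummerM, ← tsum_mul_left]
        refine (tsum_congr fun k => ?_).symm
        rw [rbeta_shift hα hγ k]
        ring
    _ = ∑' k, ∫ t, F k t ∂μ := by
        exact (tsum_congr fun k => (hFval k).symm)
    _ = ∫ t, (∑' k, F k t) ∂μ := hswap
    _ = ∫ t in Ioc (0:ℝ) 1, Real.exp (z*t) * t ^ (α-1) * (1-t) ^ (γ-1) :=
        setIntegral_congr_fun measurableSet_Ioc hpt

lemma subst_lemma {ν : ℝ} (hν : 0 < ν) (α E c : ℝ) :
    ∫ u in (0:ℝ)..ν, Real.exp (c*u) * u ^ (α-1) * (1-u/ν) ^ E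
      = ν ^ α * ∫ t in (0:ℝ)..1, Real.exp ((c*ν)*t) * t ^ (α-1) * (1-t) ^ E := by
  set f : ℝ → ℝ := fun t => Real.exp ((c*ν)*t) * t ^ (α-1) * (1-t) ^ E with hf
  have h1 : ∫ u in (0:ℝ)..ν, f (u/ν) = ν • ∫ t in (0:ℝ)/ν..ν/ν, f t :=
    intervalIntegral.integral_comp_div f hν.ne'
  have h2 : ∀ u ∈ Set.uIcc (0:ℝ) ν,
      Real.exp (c*u) * u ^ (α-1) * (1-u/ν) ^ E = ν ^ (α-1) * f (u/ν) := by
    intro u hu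
    rw [Set.uIcc_of_le hν.le] at hu
    have hu0 : (0:ℝ) ≤ u := hu.1
    rw [hf]
    simp only []
    rw [show (c*ν)*(u/ν) = c*u by field_simp, Real.div_rpow hu0 hν.le]
    rw [Real.rpow_sub hν, Real.rpow_one]
    field_simp
  rw [intervalIntegral.integral_congr h2, intervalIntegral.integral_const_mul, h1]
  rw [zero_div, div_self hν.ne', smul_eq_mul, ← mul_assoc,
    mul_comm (ν ^ (α-1)) ν, show ν * ν ^ (α-1) = ν ^ (1:ℝ) * ν ^ (α-1) by rw [Real.rpow_one],
    ← Real.rpow_add hν]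
  norm_num

lemma pow_limit {u δ : ℝ} (hu : 0 < u) (hδ : 0 < δ) (s : ℝ) :
    Tendsto (fun ν : ℝ => (1-u/ν) ^ (ν/δ+s)) atTop (nhds (Real.exp (-u/δ))) := by
  have h1 : Tendsto (fun ν : ℝ => (1-u/ν) ^ ν) atTop (nhds (Real.exp (-u))) := by
    have := Real.tendsto_one_add_div_rpow_exp (-u)
    refine this.congr fun ν => ?_
    rw [neg_div, ← sub_eq_add_neg]
  have h2 : Tendsto (fun ν : ℝ => ((1-u/ν) ^ ν) ^ (1/δ)) atTop
      (nhds ((Real.exp (-u)) ^ (1/δ))) :=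
    ((Real.continuousAt_rpow_const _ _ (Or.inl (Real.exp_ne_zero _))).tendsto).comp h1
  have h3 : Tendsto (fun ν : ℝ => (1-u/ν) ^ s) atTop (nhds ((1:ℝ) ^ s)) := by
    have hb : Tendsto (fun ν : ℝ => 1-u/ν) atTop (nhds 1) := by
      have : Tendsto (fun ν : ℝ => u/ν) atTop (nhds 0) := by
        simpa [div_eq_mul_inv] using tendsto_inv_atTop_zero.const_mul u
      simpa using tendsto_const_nhds.sub this
    exact ((Real.continuousAt_rpow_const _ _ (Or.inl one_ne_zero)).tendsto).comp hb
  have hval : (Real.exp (-u)) ^ (1/δ) * (1:ℝ) ^ s = Real.exp (-u/δ) := by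
    rw [Real.one_rpow, mul_one, ← Real.exp_mul]
    ring_nf
  have hcomb := h2.mul h3
  rw [hval] at hcomb
  refine hcomb.congr' ?_
  filter_upwards [eventually_gt_atTop (max u 0)] with ν hν
  have hν0 : 0 < ν := lt_of_le_of_lt (le_max_right u 0) hν
  have hb : 0 < 1 - u/ν := by
    rw [sub_pos, div_lt_one hν0]
    exact lt_of_le_of_lt (le_max_left u 0) hν
  rw [← Real.rpow_mul hb.le, Real.rpow_add hb]
  congr 1
  ring

lemma bound_integrable {α ε : ℝ} (hα : 0 < α) (hε : 0 < ε) :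
    IntegrableOn (fun u : ℝ => u ^ (α-1) * Real.exp (-(ε*u))) (Ioi 0) := by
  have h0 := Real.GammaIntegral_convergent hα
  have h1 : IntegrableOn (fun u : ℝ => Real.exp (-(ε*u)) * (ε*u) ^ (α-1)) (Ioi 0) := by
    have := (integrableOn_Ioi_comp_mul_left_iff
      (fun x : ℝ => Real.exp (-x) * x ^ (α-1)) 0 hε).mpr (by simpa using h0)
    simpa using this
  have h2 := h1.const_mul (ε ^ (α-1))⁻¹
  refine IntegrableOn.congr_fun h2 (fun u hu => ?_) measurableSet_Ioi
  have hu0 : (0:ℝ) < u := hu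
  rw [Real.mul_rpow hε.le hu0.le]
  have hne : ε ^ (α-1) ≠ 0 := (Real.rpow_pos_of_pos hε _).ne'
  field_simp

lemma J_tendsto {α δ : ℝ} (s c : ℝ) (hα : 0 < α) (hδ : 0 < δ) (hc : c < 1/δ) :
    Tendsto (fun ν : ℝ => ∫ u in (0:ℝ)..ν, Real.exp (c*u) * u ^ (α-1) * (1-u/ν) ^ (ν/δ+s))
      atTop (nhds ((1/(1/δ-c)) ^ α * Real.Gamma α)) := by
  set ε : ℝ := (1/δ - c)/2 with hε
  have hεpos : 0 < ε := by rw [hε]; linarith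
  set g : ℝ → ℝ := fun u => u ^ (α-1) * Real.exp (-(ε*u)) with hg
  set flim : ℝ → ℝ := fun u => Real.exp (c*u) * u ^ (α-1) * Real.exp (-u/δ) with hflim
  set F : ℝ → ℝ → ℝ := fun ν u => (Ioc (0:ℝ) ν).indicator
    (fun u => Real.exp (c*u) * u ^ (α-1) * (1-u/ν) ^ (ν/δ+s)) u with hFdef
  have hEev : ∀ᶠ ν : ℝ in atTop, 0 < ν ∧ 0 < ν/δ + s ∧ |s| ≤ ε*ν := by
    filter_upwards [eventually_ge_atTop (max (|s|/ε) (δ*(|s|+1)))] with ν hν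
    have hν1 : |s|/ε ≤ ν := le_trans (le_max_left _ _) hν
    have hν2 : δ*(|s|+1) ≤ ν := le_trans (le_max_right _ _) hν
    have hνpos : 0 < ν := lt_of_lt_of_le (by positivity) hν2
    have hq : |s| + 1 ≤ ν/δ := by
      rw [le_div_iff₀ hδ]; nlinarith
    refine ⟨hνpos, by linarith [neg_abs_le s], ?_⟩
    rw [div_le_iff₀ hεpos] at hν1
    nlinarith
  have key : Tendsto (fun ν : ℝ => ∫ u in Ioi (0:ℝ), F ν u) atTop
      (nhds (∫ u in Ioi (0:ℝ), flim u)) := by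
    refine tendsto_integral_filter_of_dominated_convergence g ?_ ?_ ?_ ?_
    · -- measurability
      filter_upwards [hEev] with ν hν
      have hco : ContinuousOn
          (fun u : ℝ => Real.exp (c*u) * u ^ (α-1) * (1-u/ν) ^ (ν/δ+s)) (Ioi 0) := by
        refine ContinuousOn.mul (ContinuousOn.mul ?_ ?_) ?_
        · exact (Real.continuous_exp.comp (continuous_const.mul continuous_id)).continuousOn
        · exact ContinuousOn.rpow_const continuousOn_id (fun x hx => Or.inl (ne_of_gt hx))
        · exact ContinuousOn.rpow_const
            ((continuous_const.sub (continuous_id.div_const ν)).continuousOn)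
            (fun x _ => Or.inr hν.2.1.le)
      exact ((hco.aestronglyMeasurable measurableSet_Ioi).indicator measurableSet_Ioc)
    · -- bound
      filter_upwards [hEev] with ν hν
      obtain ⟨hνpos, hE, hsν⟩ := hν
      rw [MeasureTheory.ae_restrict_iff' measurableSet_Ioi]
      filter_upwards with u hu
      have hu0 : (0:ℝ) < u := hu
      by_cases hmem : u ∈ Ioc (0:ℝ) ν
      · have h1 : 0 ≤ 1 - u/ν := by
          rw [sub_nonneg, div_le_one hνpos]; exact hmem.2
        have hFeq : F ν u = Real.exp (c*u) * u ^ (α-1) * (1-u/ν) ^ (ν/δ+s) := by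
          rw [hFdef]; exact indicator_of_mem hmem _
        have harg : (ν/δ+s) * (-(u/ν)) ≤ -(u/δ) + ε*u := by
          have expand : (ν/δ+s) * (-(u/ν)) = -(u/δ) - s*(u/ν) := by
            field_simp; ring
          rw [expand]
          have h5 : -(s*(u/ν)) ≤ |s| * (u/ν) := by
            have h6 : 0 ≤ u/ν := by positivity
            nlinarith [neg_abs_le s, abs_nonneg s]
          have h7 : |s| * (u/ν) ≤ ε*u := by
            rw [mul_div_assoc' , div_le_iff₀ hνpos]
            calc |s| * u ≤ (ε*ν)*u := by nlinarith [abs_nonneg s]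
              _ = ε*u*ν := by ring
          linarith
        have hpow : (1-u/ν) ^ (ν/δ+s) ≤ Real.exp (-(u/δ) + ε*u) := by
          rcases eq_or_lt_of_le h1 with h|h
          · rw [← h, Real.zero_rpow hE.ne']
            positivity
          · rw [Real.rpow_def_of_pos h]
            refine Real.exp_le_exp.mpr ?_
            have hlog : Real.log (1-u/ν) ≤ -(u/ν) := by
              have := Real.log_le_sub_one_of_pos h
              linarith
            calc Real.log (1-u/ν) * (ν/δ+s) = (ν/δ+s) * Real.log (1-u/ν) := by ring
              _ ≤ (ν/δ+s) * (-(u/ν)) := mul_le_mul_of_nonneg_left hlog hE.le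
              _ ≤ -(u/δ) + ε*u := harg
        rw [hFeq, Real.norm_eq_abs, abs_of_nonneg (by positivity)]
        calc Real.exp (c*u) * u ^ (α-1) * (1-u/ν) ^ (ν/δ+s)
            ≤ Real.exp (c*u) * u ^ (α-1) * Real.exp (-(u/δ) + ε*u) := by
              have h8 : (0:ℝ) ≤ Real.exp (c*u) * u ^ (α-1) := by positivity
              exact mul_le_mul_of_nonneg_left hpow h8
          _ = g u := by
              rw [hg]
              simp only []
              rw [mul_comm (Real.exp (c*u)) (u ^ (α-1)), mul_assoc, ← Real.exp_add]
              congr 1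
              rw [hε]
              field_simp
              ring
      · have h0 : F ν u = 0 := indicator_of_notMem hmem _
        rw [h0]
        simp only [norm_zero]
        rw [hg]
        positivity
    · exact bound_integrable hα hεpos
    · -- pointwise limit
      rw [MeasureTheory.ae_restrict_iff' measurableSet_Ioi]
      filter_upwards with u hu
      have hu0 : (0:ℝ) < u := hu
      have hev : (fun ν : ℝ => Real.exp (c*u) * u ^ (α-1) * (1-u/ν) ^ (ν/δ+s))
          =ᶠ[atTop] (fun ν : ℝ => F ν u) := by
        filter_upwards [eventually_ge_atTop u] with ν hν
        have hm : u ∈ Ioc (0:ℝ) ν := ⟨hu0, hν⟩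
        simp only [hFdef, Set.indicator_of_mem hm]
      refine Tendsto.congr' hev ?_
      have hmu := (pow_limit hu0 hδ s).const_mul (Real.exp (c*u) * u ^ (α-1))
      rw [hflim]
      simp only []
      refine hmu.congr fun ν => by ring
  have hval : ∫ u in Ioi (0:ℝ), flim u = (1/(1/δ-c)) ^ α * Real.Gamma α := by
    rw [← Real.integral_rpow_mul_exp_neg_mul_Ioi hα (show (0:ℝ) < 1/δ - c by linarith)]
    refine setIntegral_congr_fun measurableSet_Ioi (fun u hu => ?_)
    rw [hflim]
    simp only []
    rw [mul_comm (Real.exp (c*u)) (u ^ (α-1)), mul_assoc, ← Real.exp_add]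
    congr 1
    ring
  rw [hval] at key
  refine key.congr' ?_
  filter_upwards [eventually_gt_atTop (0:ℝ)] with ν hν
  rw [hFdef]
  rw [MeasureTheory.setIntegral_indicator measurableSet_Ioc,
    show Ioi (0:ℝ) ∩ Ioc (0:ℝ) ν = Ioc 0 ν by
      rw [Set.inter_eq_self_of_subset_right]
      exact Set.Ioc_subset_Ioi_self,
    ← intervalIntegral.integral_of_le hν.le]

lemma kummerM_zero (a b : ℝ) : kummerM a b 0 = 1 := by
  rw [kummerM]
  rw [tsum_eq_single 0 (fun k hk => by simp [zero_pow hk])]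
  simp [poch]

lemma kummer_tendsto {α δ : ℝ} (e c : ℝ) (hα : 0 < α) (hδ : 0 < δ) (hc : c < 1/δ) :
    Tendsto (fun ν : ℝ => kummerM α (ν/δ + e) (c*ν)) atTop (nhds ((1 - c*δ) ^ (-α))) := by
  set s : ℝ := e - α - 1 with hs
  set J : ℝ → ℝ → ℝ := fun c' ν =>
    ∫ u in (0:ℝ)..ν, Real.exp (c'*u) * u ^ (α-1) * (1-u/ν) ^ (ν/δ+s) with hJ
  have h0δ : (0:ℝ) < 1/δ := by positivity
  have h1 := J_tendsto (δ := δ) s c hα hδ hc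
  have h0 := J_tendsto (δ := δ) s 0 hα hδ h0δ
  have hL0 : (0:ℝ) < (1/(1/δ-0)) ^ α * Real.Gamma α := by
    have := Real.Gamma_pos_of_pos hα
    have h2 : (0:ℝ) < 1/(1/δ-0) := by rw [sub_zero]; positivity
    positivity
  have hdiv := h1.div h0 hL0.ne'
  have hx : (0:ℝ) < 1/δ - c := by linarith
  have hcδ : (0:ℝ) < 1 - c*δ := by
    have h4 := mul_lt_mul_of_pos_right hc hδ
    rw [one_div, inv_mul_cancel₀ hδ.ne'] at h4
    linarith
  have hvalue : ((1/(1/δ-c)) ^ α * Real.Gamma α) / ((1/(1/δ-0)) ^ α * Real.Gamma α)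
      = (1 - c*δ) ^ (-α) := by
    have hΓ := (Real.Gamma_pos_of_pos hα).ne'
    rw [sub_zero, mul_div_mul_right _ _ hΓ, ← Real.div_rpow (by positivity) (by positivity)]
    rw [show (1/(1/δ-c)) / (1/(1/δ)) = (1-c*δ)⁻¹ by
      rw [one_div_one_div, show 1/δ - c = (1-c*δ)/δ by field_simp, one_div_div]
      rw [div_div, mul_comm, ← div_div, div_self hδ.ne', one_div] ]
    rw [Real.rpow_neg hcδ.le, ← Real.inv_rpow hcδ.le]
  rw [hvalue] at hdiv
  refine hdiv.congr' ?_
  filter_upwards [eventually_gt_atTop (max 0 (δ*(α-e)))] with ν hν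
  have hνpos : 0 < ν := lt_of_le_of_lt (le_max_left _ _) hν
  have hγ : 0 < ν/δ + e - α := by
    have h3 : δ*(α-e) < ν := lt_of_le_of_lt (le_max_right _ _) hν
    have h4 : α - e < ν/δ := by rw [lt_div_iff₀ hδ]; linarith
    linarith
  set γ : ℝ := ν/δ + e - α with hγdef
  have hE : γ - 1 = ν/δ + s := by rw [hγdef, hs]; ring
  have heq1 : rbeta α γ * kummerM α (ν/δ + e) (c*ν)
      = ∫ t in Ioc (0:ℝ) 1, Real.exp ((c*ν)*t) * t ^ (α-1) * (1-t) ^ (γ-1) := by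
    have := euler_rep hα hγ (c*ν)
    rwa [show α + γ = ν/δ + e by rw [hγdef]; ring] at this
  have heq0 : rbeta α γ = ∫ t in Ioc (0:ℝ) 1, Real.exp ((0:ℝ)*t) * t ^ (α-1) * (1-t) ^ (γ-1) := by
    have := euler_rep hα hγ 0
    rwa [show α + γ = ν/δ + e by rw [hγdef]; ring, kummerM_zero, mul_one] at this
  have hJc : J c ν = (ν ^ α * rbeta α γ) * kummerM α (ν/δ + e) (c*ν) := by
    rw [hJ]
    simp only []
    rw [← hE, subst_lemma hνpos α (γ-1) c,
      intervalIntegral.integral_of_le (by norm_num : (0:ℝ) ≤ 1), ← heq1]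
    ring
  have hJ0 : J 0 ν = (ν ^ α * rbeta α γ) * 1 := by
    rw [hJ]
    simp only []
    rw [← hE, subst_lemma hνpos α (γ-1) 0,
      intervalIntegral.integral_of_le (by norm_num : (0:ℝ) ≤ 1)]
    simp only [zero_mul] at heq0 ⊢
    rw [← heq0, mul_one]
  have hne : ν ^ α * rbeta α γ ≠ 0 := by
    have := rbeta_pos hα hγ
    have := Real.rpow_pos_of_pos hνpos α
    positivity
  show J c ν / J 0 ν = _
  rw [hJc, hJ0, mul_one, mul_comm (ν ^ α * rbeta α γ), mul_div_assoc, div_self hne, mul_one]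

/-- Bursting (negative-binomial-type) limit of the binary model. -/
theorem bursting_limit (a δ θ : ℝ) (ha : 0 < a) (hδ : 0 < δ)
    (hθ0 : 0 < θ) (hθ1 : θ ≤ 1) (hδθ : δ * (1 - θ) < 1) (n : ℕ) :
    Filter.Tendsto (fun ν : ℝ => P0 a (ν / δ) ν θ n + P1 a (ν / δ) ν θ n)
      Filter.atTop
      (nhds (poch a n / (Nat.factorial n : ℝ) * (δ / (1 + δ * θ)) ^ n *
        ((1 + δ * (θ - 1)) / (1 + δ * θ)) ^ a)) := by
  have hθc : 1 - θ < 1/δ := by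
    rw [lt_div_iff₀ hδ]; nlinarith
  have hneg : -θ < 1/δ := by
    have : (0:ℝ) < 1/δ := by positivity
    linarith
  set X : ℝ := 1 + δ*(θ-1) with hXdef
  set Y : ℝ := 1 + δ*θ with hYdef
  have hX : 0 < X := by rw [hXdef]; nlinarith
  have hY : 0 < Y := by rw [hYdef]; nlinarith
  -- Kummer limits
  have hK1 : Tendsto (fun ν : ℝ => kummerM a (ν/δ) (ν*(1-θ))) atTop (nhds (X ^ (-a))) := by
    have h := kummer_tendsto (δ := δ) 0 (1-θ) ha hδ hθc
    rw [show (1:ℝ) - (1-θ)*δ = X by rw [hXdef]; ring] at h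
    exact h.congr fun ν => by rw [add_zero, mul_comm]
  have hK2 : Tendsto (fun ν : ℝ => kummerM (a+(n:ℝ)) (1+ν/δ+(n:ℝ)) (-(ν*θ))) atTop
      (nhds (Y ^ (-(a+(n:ℝ))))) := by
    have h := kummer_tendsto (α := a+(n:ℝ)) (δ := δ) (1+(n:ℝ)) (-θ) (by positivity) hδ hneg
    rw [show (1:ℝ) - (-θ)*δ = Y by rw [hYdef]; ring] at h
    exact h.congr fun ν => by rw [show ν/δ + (1+(n:ℝ)) = 1+ν/δ+(n:ℝ) by ring,
      show (-θ)*ν = -(ν*θ) by ring]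
  have hK3 : Tendsto (fun ν : ℝ => kummerM (1+a+(n:ℝ)) (1+ν/δ+(n:ℝ)) (-(ν*θ))) atTop
      (nhds (Y ^ (-(1+a+(n:ℝ))))) := by
    have h := kummer_tendsto (α := 1+a+(n:ℝ)) (δ := δ) (1+(n:ℝ)) (-θ) (by positivity) hδ hneg
    rw [show (1:ℝ) - (-θ)*δ = Y by rw [hYdef]; ring] at h
    exact h.congr fun ν => by rw [show ν/δ + (1+(n:ℝ)) = 1+ν/δ+(n:ℝ) by ring,
      show (-θ)*ν = -(ν*θ) by ring]
  have hK1ne : X ^ (-a) ≠ 0 := (Real.rpow_pos_of_pos hX _).ne'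
  -- prefactor limits
  have hnum1 : Tendsto (fun ν : ℝ => 1 - a*δ/ν) atTop (nhds 1) := by
    have h := tendsto_inv_atTop_zero.const_mul (a*δ)
    have h2 := tendsto_const_nhds (α := ℝ) (x := (1:ℝ)) (f := atTop).sub h
    simpa [div_eq_mul_inv] using h2
  have hnum0 : Tendsto (fun ν : ℝ => a*δ/ν) atTop (nhds 0) := by
    have h := tendsto_inv_atTop_zero.const_mul (a*δ)
    simpa [div_eq_mul_inv] using h
  have hA : Tendsto (fun ν : ℝ => (ν/δ - a) / (kummerM a (ν/δ) (ν*(1-θ)) * (ν/δ)))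
      atTop (nhds (X ^ a)) := by
    have h := hnum1.div hK1 hK1ne
    have hval : (1:ℝ) / X ^ (-a) = X ^ a := by
      rw [Real.rpow_neg hX.le, one_div, inv_inv]
    rw [hval] at h
    refine h.congr' ?_
    filter_upwards [eventually_gt_atTop (0:ℝ)] with ν hν
    simp only [Pi.div_apply]
    conv_rhs => rw [mul_comm, ← div_div, sub_div,
      div_self (by positivity : (ν/δ:ℝ) ≠ 0), div_div_eq_mul_div]
  have hA1 : Tendsto (fun ν : ℝ => a / (kummerM a (ν/δ) (ν*(1-θ)) * (ν/δ)))
      atTop (nhds 0) := by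
    have h := hnum0.div hK1 hK1ne
    rw [zero_div] at h
    refine h.congr' ?_
    filter_upwards [eventually_gt_atTop (0:ℝ)] with ν hν
    simp only [Pi.div_apply]
    conv_rhs => rw [mul_comm, ← div_div, div_div_eq_mul_div]
  -- middle factor limit
  have hG2 : ∀ p : ℝ, Tendsto (fun ν : ℝ => ν^n/(Nat.factorial n : ℝ)
      * (poch p n / poch (1+ν/δ) n)) atTop
      (nhds (poch p n/(Nat.factorial n : ℝ) * δ^n)) := by
    intro p
    have hfac : ∀ k : ℕ, Tendsto (fun ν : ℝ => ν/(1+ν/δ+(k:ℝ))) atTop (nhds δ) := by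
      intro k
      have hden : Tendsto (fun ν : ℝ => (1+(k:ℝ))*ν⁻¹ + 1/δ) atTop (nhds (1/δ)) := by
        have h := tendsto_inv_atTop_zero.const_mul (1+(k:ℝ))
        have h2 := h.add (tendsto_const_nhds (α := ℝ) (x := 1/δ) (f := atTop))
        simpa using h2
      have h := (tendsto_const_nhds (α := ℝ) (x := (1:ℝ)) (f := atTop)).div hden
        (by positivity)
      rw [show (1:ℝ)/(1/δ) = δ by rw [one_div_one_div]] at h
      refine h.congr' ?_
      filter_upwards [eventually_gt_atTop (0:ℝ)] with ν hν
      simp only [Pi.div_apply]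
      rw [show (1+(k:ℝ))*ν⁻¹ + 1/δ = (1+ν/δ+(k:ℝ))/ν by field_simp; ring, one_div_div]
    have hprod := tendsto_finset_prod (Finset.range n)
      (fun k _ => hfac k)
    rw [Finset.prod_const, Finset.card_range] at hprod
    have h := hprod.const_mul (poch p n/(Nat.factorial n : ℝ))
    refine h.congr fun ν => ?_
    rw [show (∏ k ∈ Finset.range n, ν/(1+ν/δ+(k:ℝ))) = ν^n / poch (1+ν/δ) n from by
      rw [Finset.prod_div_distrib, Finset.prod_const, Finset.card_range, poch]]
    ring
  -- combine
  have hP0 : Tendsto (fun ν : ℝ => P0 a (ν/δ) ν θ n) atTop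
      (nhds (X^a * (poch a n/(Nat.factorial n : ℝ) * δ^n) * Y^(-(a+(n:ℝ))))) := by
    have h := (hA.mul (hG2 a)).mul hK2
    refine h.congr fun ν => ?_
    simp only [P0]
    ring
  have hP1 : Tendsto (fun ν : ℝ => P1 a (ν/δ) ν θ n) atTop (nhds 0) := by
    have h := (hA1.mul (hG2 (1+a))).mul hK3
    rw [zero_mul, zero_mul] at h
    refine h.congr fun ν => ?_
    simp only [P1]
    ring
  have hsum := hP0.add hP1
  have hYa : Y ^ a ≠ 0 := (Real.rpow_pos_of_pos hY _).ne'
  have hYn : Y ^ n ≠ 0 := pow_ne_zero _ hY.ne'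
  have heq : X^a * (poch a n/(Nat.factorial n : ℝ) * δ^n) * Y^(-(a+(n:ℝ))) + 0
      = poch a n / (Nat.factorial n : ℝ) * (δ / Y) ^ n * (X / Y) ^ a := by
    rw [add_zero, div_pow, Real.div_rpow hX.le hY.le,
      show -(a+(n:ℝ)) = (-a) + (-(n:ℝ)) by ring, Real.rpow_add hY,
      Real.rpow_neg hY.le, Real.rpow_neg hY.le, Real.rpow_natCast]
    field_simp
  exact heq ▸ hsum
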